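/- Let ρ > 0, λ > 0, U ∈ ℝ and K ∈ ℕ, and let g be the 1D Maxwellian distribution with these parameters. Set p = ρ/(2λ), γ = (K+3)/(K+1), and E = (1/2) ρ U² + p/(γ−1). Then the energy flux moment of g equals the Euler energy flux: ∫_{ℝ × ℝ^K} u · (1/2)(u² + ‖ξ‖²) · g(u, ξ) du dξ = U (E + p). -/

import Mathlib

/-!
The Maxwellian factors into a Gaussian in `u - U` and an isotropic Gaussian in `ξ`, so by Fubini
the flux is `(1/2) ∫ u³ e^{-λ(u-U)²} · ∫ e^{-λ‖ξ‖²} + (1/2) ∫ u e^{-λ(u-U)²} · ∫ ‖ξ‖² e^{-λ‖ξ‖²}`.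
After the shift `u = x + U` the odd moments vanish, and in dimension `d` polar coordinates together
with `Γ(s + 1) = s Γ(s)` give `∫ ‖x‖² e^{-b‖x‖²} = d / (2b) · ∫ e^{-b‖x‖²}`. The flux is therefore
`(ρ/2) (U³ + (K + 3) U / (2λ))`, which is `U (E + p)`.
-/

open MeasureTheory Real

theorem Function.Odd.integral_eq_zero {G E : Type*} [MeasurableSpace G] [AddGroup G]
    [MeasurableNeg G] [NormedAddCommGroup E] [NormedSpace ℝ E] {μ : Measure G} [μ.IsNegInvariant]
    {f : G → E} (hf : Function.Odd f) : ∫ x, f x ∂μ = 0 := by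
  have h := integral_neg_eq_self f μ
  simp only [hf _, integral_neg] at h
  have hdouble : (2 : ℝ) • ∫ x, f x ∂μ = 0 := by
    rw [two_smul]; nth_rewrite 1 [← h]; exact neg_add_cancel _
  exact (smul_eq_zero.mp hdouble).resolve_left two_ne_zero

theorem integral_prod_mul_add_mul {α β : Type*} [MeasurableSpace α] [MeasurableSpace β]
    {μ : Measure α} {ν : Measure β} [SFinite μ] [SFinite ν] {f₁ f₂ : α → ℝ} {g₁ g₂ : β → ℝ}
    (hf₁ : Integrable f₁ μ) (hg₁ : Integrable g₁ ν) (hf₂ : Integrable f₂ μ)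
    (hg₂ : Integrable g₂ ν) :
    ∫ z, (f₁ z.1 * g₁ z.2 + f₂ z.1 * g₂ z.2) ∂μ.prod ν
      = (∫ x, f₁ x ∂μ) * (∫ y, g₁ y ∂ν) + (∫ x, f₂ x ∂μ) * (∫ y, g₂ y ∂ν) := by
  rw [integral_add (hf₁.mul_prod hg₁) (hf₂.mul_prod hg₂), integral_prod_mul, integral_prod_mul]

theorem integral_Ioi_rpow_add_two_mul_exp_neg_mul_sq {b s : ℝ} (hb : 0 < b) (hs : -1 < s) :
    ∫ y in Set.Ioi 0, y ^ (s + 2) * exp (-b * y ^ 2)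
      = (s + 1) / (2 * b) * ∫ y in Set.Ioi 0, y ^ s * exp (-b * y ^ 2) := by
  simp_rw [← rpow_two]
  rw [integral_rpow_mul_exp_neg_mul_rpow two_pos (by linarith) hb,
    integral_rpow_mul_exp_neg_mul_rpow two_pos hs hb,
    show (s + 2 + 1) / 2 = (s + 1) / 2 + 1 by ring, Gamma_add_one (by linarith),
    show -(s + 2 + 1) / 2 = -(s + 1) / 2 + (-1) by ring, rpow_add hb, rpow_neg_one]
  field_simp

section Radial

variable {E : Type*} [NormedAddCommGroup E] [NormedSpace ℝ E] [FiniteDimensional ℝ E]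
  [MeasurableSpace E] [BorelSpace E] (μ : Measure E) [μ.IsAddHaarMeasure] {b : ℝ}

theorem integrable_norm_pow_mul_exp_neg_mul_sq_norm (hb : 0 < b) (n : ℕ) :
    Integrable (fun x => ‖x‖ ^ n * exp (-b * ‖x‖ ^ 2)) μ := by
  rcases subsingleton_or_nontrivial E with hE | hE
  · exact integrable_const _ |>.congr (Filter.Eventually.of_forall fun x => by
      rw [Subsingleton.elim x 0])
  · refine (integrable_fun_norm_addHaar μ (f := fun y => y ^ n * exp (-b * y ^ 2))).mpr ?_
    have := integrableOn_rpow_mul_exp_neg_mul_sq hb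
      (s := ((Module.finrank ℝ E - 1 + n : ℕ) : ℝ)) (neg_one_lt_zero.trans_le (Nat.cast_nonneg _))
    simp_rw [rpow_natCast] at this
    refine this.congr_fun (fun y _ => ?_) measurableSet_Ioi
    simp only [smul_eq_mul]; ring

theorem integral_sq_norm_mul_exp_neg_mul_sq_norm (hb : 0 < b) :
    ∫ x, ‖x‖ ^ 2 * exp (-b * ‖x‖ ^ 2) ∂μ
      = Module.finrank ℝ E / (2 * b) * ∫ x, exp (-b * ‖x‖ ^ 2) ∂μ := by
  rcases subsingleton_or_nontrivial E with hE | hE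
  · simp [norm_of_subsingleton, Module.finrank_zero_of_subsingleton]
  · have hd : 1 ≤ Module.finrank ℝ E := Module.finrank_pos
    rw [integral_fun_norm_addHaar μ (fun y => y ^ 2 * exp (-b * y ^ 2)),
      integral_fun_norm_addHaar μ (fun y => exp (-b * y ^ 2))]
    have hmoment := integral_Ioi_rpow_add_two_mul_exp_neg_mul_sq hb
      (s := ((Module.finrank ℝ E - 1 : ℕ) : ℝ)) (neg_one_lt_zero.trans_le (Nat.cast_nonneg _))
    rw [show ((Module.finrank ℝ E - 1 : ℕ) : ℝ) + 2 = ((Module.finrank ℝ E - 1 + 2 : ℕ) : ℝ) by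
      push_cast; ring] at hmoment
    simp_rw [rpow_natCast] at hmoment
    simp only [smul_eq_mul, nsmul_eq_mul, ← mul_assoc, ← pow_add, hmoment]
    rw [Nat.cast_sub hd]
    ring

end Radial

section Gaussian

variable {b : ℝ}

theorem integrable_pow_mul_exp_neg_mul_sq (hb : 0 < b) (n : ℕ) :
    Integrable (fun x : ℝ => x ^ n * exp (-b * x ^ 2)) := by
  simpa [rpow_natCast] using
    integrable_rpow_mul_exp_neg_mul_sq hb (neg_one_lt_zero.trans_le (Nat.cast_nonneg n))

theorem integrable_pow_mul_exp_neg_mul_sq_sub (hb : 0 < b) (n : ℕ) (c : ℝ) :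
    Integrable (fun x : ℝ => x ^ n * exp (-b * (x - c) ^ 2)) := by
  have h : Integrable (fun x : ℝ => (x + c) ^ n * exp (-b * x ^ 2)) := by
    simp_rw [add_pow, Finset.sum_mul]
    refine integrable_finsetSum _ fun k _ => ?_
    simpa [mul_comm, mul_assoc, mul_left_comm] using
      (integrable_pow_mul_exp_neg_mul_sq hb k).const_mul (c ^ (n - k) * n.choose k)
  simpa using h.comp_sub_right c

theorem integral_sq_mul_exp_neg_mul_sq (hb : 0 < b) :
    ∫ x : ℝ, x ^ 2 * exp (-b * x ^ 2) = 1 / (2 * b) * √(π / b) := by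
  have h := integral_sq_norm_mul_exp_neg_mul_sq_norm (volume : Measure ℝ) hb
  simpa only [norm_eq_abs, sq_abs, Module.finrank_self, Nat.cast_one, integral_gaussian] using h

theorem integral_mul_exp_neg_mul_sq_sub (hb : 0 < b) (c : ℝ) :
    ∫ x : ℝ, x * exp (-b * (x - c) ^ 2) = c * √(π / b) := by
  have hodd : Function.Odd (fun x : ℝ => x * exp (-b * x ^ 2)) := fun x => by simp
  calc ∫ x : ℝ, x * exp (-b * (x - c) ^ 2)
      = ∫ x : ℝ, (x + c) * exp (-b * x ^ 2) := by
        rw [← integral_sub_right_eq_self (fun x => (x + c) * exp (-b * x ^ 2)) c]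
        simp
    _ = ∫ x : ℝ, x * exp (-b * x ^ 2) + c * exp (-b * x ^ 2) := by simp_rw [add_mul]
    _ = c * √(π / b) := by
      rw [integral_add (by simpa using integrable_pow_mul_exp_neg_mul_sq hb 1)
        ((integrable_exp_neg_mul_sq hb).const_mul c), hodd.integral_eq_zero, integral_const_mul,
        integral_gaussian, zero_add]

theorem integral_pow_three_mul_exp_neg_mul_sq_sub (hb : 0 < b) (c : ℝ) :
    ∫ x : ℝ, x ^ 3 * exp (-b * (x - c) ^ 2) = (c ^ 3 + 3 * c / (2 * b)) * √(π / b) := by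
  have hodd : Function.Odd (fun x : ℝ => (x ^ 3 + 3 * c ^ 2 * x) * exp (-b * x ^ 2)) :=
    fun x => by simp only [neg_sq, Odd.neg_pow (by decide : Odd 3)]; ring
  have hint_odd : Integrable (fun x : ℝ => (x ^ 3 + 3 * c ^ 2 * x) * exp (-b * x ^ 2)) :=
    ((integrable_pow_mul_exp_neg_mul_sq hb 3).add
      ((integrable_pow_mul_exp_neg_mul_sq hb 1).const_mul (3 * c ^ 2))).congr
      (Filter.Eventually.of_forall fun x => by simp only [Pi.add_apply]; ring)
  have hint_sq : Integrable (fun x : ℝ => 3 * c * (x ^ 2 * exp (-b * x ^ 2))) :=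
    (integrable_pow_mul_exp_neg_mul_sq hb 2).const_mul _
  have hint_const : Integrable (fun x : ℝ => c ^ 3 * exp (-b * x ^ 2)) :=
    (integrable_exp_neg_mul_sq hb).const_mul _
  calc ∫ x : ℝ, x ^ 3 * exp (-b * (x - c) ^ 2)
      = ∫ x : ℝ, (x + c) ^ 3 * exp (-b * x ^ 2) := by
        rw [← integral_sub_right_eq_self (fun x => (x + c) ^ 3 * exp (-b * x ^ 2)) c]
        simp
    _ = ∫ x : ℝ, (x ^ 3 + 3 * c ^ 2 * x) * exp (-b * x ^ 2)
          + (3 * c * (x ^ 2 * exp (-b * x ^ 2)) + c ^ 3 * exp (-b * x ^ 2)) := by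
        congr 1 with x; ring
    _ = (c ^ 3 + 3 * c / (2 * b)) * √(π / b) := by
      rw [integral_add hint_odd (hint_sq.add hint_const : Integrable fun x : ℝ => _ + _),
        hodd.integral_eq_zero,
        integral_add hint_sq hint_const, integral_const_mul, integral_const_mul,
        integral_sq_mul_exp_neg_mul_sq hb, integral_gaussian]
      ring

end Gaussian

theorem div_rpow_mul_sqrt_mul_div_rpow_eq_one {a b : ℝ} (ha : 0 < a) (hb : 0 < b) (K : ℕ) :
    (a / b) ^ (((K : ℝ) + 1) / 2) * (√(b / a) * (b / a) ^ ((K : ℝ) / 2)) = 1 := by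
  rw [sqrt_eq_rpow, ← rpow_add (by positivity), show (1 : ℝ) / 2 + K / 2 = (K + 1) / 2 by ring,
    ← mul_rpow (by positivity) (by positivity), show a / b * (b / a) = 1 by field_simp, one_rpow]

theorem maxwellian_energy_flux_moment_general
    (ρ lam U : ℝ) (K : ℕ) (hlam : 0 < lam)
    (g : ℝ × EuclideanSpace ℝ (Fin K) → ℝ)
    (hg : ∀ (u : ℝ) (ξ : EuclideanSpace ℝ (Fin K)),
      g (u, ξ) = ρ * (lam / π) ^ (((K : ℝ) + 1) / 2) *
        Real.exp (-lam * ((u - U) ^ 2 + ‖ξ‖ ^ 2)))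
    (p γ E : ℝ) (hp : p = ρ / (2 * lam)) (hγ : γ = ((K : ℝ) + 3) / ((K : ℝ) + 1))
    (hE : E = (1 / 2) * ρ * U ^ 2 + p / (γ - 1)) :
    ∫ q : ℝ × EuclideanSpace ℝ (Fin K),
      q.1 * ((1 / 2) * (q.1 ^ 2 + ‖q.2‖ ^ 2)) * g q = U * (E + p) := by
  have hsplit : ∀ q : ℝ × EuclideanSpace ℝ (Fin K),
      q.1 * ((1 / 2) * (q.1 ^ 2 + ‖q.2‖ ^ 2)) * g q
        = ρ * (lam / π) ^ (((K : ℝ) + 1) / 2) / 2 *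
          (q.1 ^ 3 * exp (-lam * (q.1 - U) ^ 2) * exp (-lam * ‖q.2‖ ^ 2)
            + q.1 * exp (-lam * (q.1 - U) ^ 2) * (‖q.2‖ ^ 2 * exp (-lam * ‖q.2‖ ^ 2))) := by
    rintro ⟨u, ξ⟩
    rw [hg, mul_add (-lam), exp_add]
    ring
  have hint_lin : Integrable fun u : ℝ => u * exp (-lam * (u - U) ^ 2) := by
    simpa using integrable_pow_mul_exp_neg_mul_sq_sub hlam 1 U
  have hint_gauss : Integrable fun ξ : EuclideanSpace ℝ (Fin K) => exp (-lam * ‖ξ‖ ^ 2) := by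
    simpa using integrable_norm_pow_mul_exp_neg_mul_sq_norm volume hlam 0
  have hγ1 : γ - 1 = 2 / ((K : ℝ) + 1) := by
    rw [hγ]
    field_simp
    ring
  simp_rw [hsplit]
  rw [integral_const_mul, Measure.volume_eq_prod,
    integral_prod_mul_add_mul (integrable_pow_mul_exp_neg_mul_sq_sub hlam 3 U) hint_gauss hint_lin
      (integrable_norm_pow_mul_exp_neg_mul_sq_norm volume hlam 2),
    integral_pow_three_mul_exp_neg_mul_sq_sub hlam, integral_mul_exp_neg_mul_sq_sub hlam,
    integral_sq_norm_mul_exp_neg_mul_sq_norm volume hlam,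
    GaussianFourier.integral_rexp_neg_mul_sq_norm hlam, finrank_euclideanSpace_fin,
    hE, hγ1, div_div_eq_mul_div, hp]
  linear_combination (ρ / 2 * (U ^ 3 + (K + 3) * U / (2 * lam))) *
    div_rpow_mul_sqrt_mul_div_rpow_eq_one hlam pi_pos K

theorem maxwellian_energy_flux_moment
    (ρ lam U : ℝ) (K : ℕ) (hρ : 0 < ρ) (hlam : 0 < lam)
    (g : ℝ × EuclideanSpace ℝ (Fin K) → ℝ)
    (hg : ∀ (u : ℝ) (ξ : EuclideanSpace ℝ (Fin K)),
      g (u, ξ) = ρ * (lam / π) ^ (((K : ℝ) + 1) / 2) *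
        Real.exp (-lam * ((u - U) ^ 2 + ‖ξ‖ ^ 2)))
    (p γ E : ℝ) (hp : p = ρ / (2 * lam)) (hγ : γ = ((K : ℝ) + 3) / ((K : ℝ) + 1))
    (hE : E = (1 / 2) * ρ * U ^ 2 + p / (γ - 1)) :
    ∫ q : ℝ × EuclideanSpace ℝ (Fin K),
      q.1 * ((1 / 2) * (q.1 ^ 2 + ‖q.2‖ ^ 2)) * g q = U * (E + p) :=
  maxwellian_energy_flux_moment_general ρ lam U K hlam g hg p γ E hp hγ hE
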